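/- arXiv:1511.08403 — 2 statements merged into one kernel-verified Lean document; each statement's English description precedes it below -/
import Mathlib

section
/- If G is a minimal forbidden induced subgraph for Υ_k, then G has a unique dominating vertex. -/
open SimpleGraph

attribute [local instance] Classical.propDecidable

set_option linter.unnecessarySeqFocus false

/-- `G ∈ Υ_k`: every nonempty induced subgraph `H` satisfies `Δ(H) + 1 ≤ χ(H) + k`,
i.e. `Δ(H) ≤ χ(H) + k - 1`. -/
def UpsilonMem (k : ℕ) {V : Type*} [Fintype V] (G : SimpleGraph V) : Prop :=
  ∀ s : Finset V, s.Nonempty →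
    ((G.induce (s : Set V)).maxDegree + 1 : ℕ∞) ≤
      (G.induce (s : Set V)).chromaticNumber + (k : ℕ∞)

/-- `G ∈ Ω_k`: every nonempty induced subgraph `H` satisfies `Δ(H) + 1 ≤ ω(H) + k`. -/
def OmegaMem (k : ℕ) {V : Type*} [Fintype V] (G : SimpleGraph V) : Prop :=
  ∀ s : Finset V, s.Nonempty →
    (G.induce (s : Set V)).maxDegree + 1 ≤ (G.induce (s : Set V)).cliqueNum + k

/-- `G` is a minimal forbidden induced subgraph for `Υ_k`. -/
def MinForbUpsilon (k : ℕ) {V : Type*} [Fintype V] (G : SimpleGraph V) : Prop :=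
  ¬ UpsilonMem k G ∧
    ∀ s : Finset V, s ≠ Finset.univ → UpsilonMem k (G.induce (s : Set V))

/-- `G` is a minimal forbidden induced subgraph for `Ω_k`. -/
def MinForbOmega (k : ℕ) {V : Type*} [Fintype V] (G : SimpleGraph V) : Prop :=
  ¬ OmegaMem k G ∧
    ∀ s : Finset V, s ≠ Finset.univ → OmegaMem k (G.induce (s : Set V))

/-- `v` is a dominating vertex of `G`. -/
def IsDominatingVertex {V : Type*} (G : SimpleGraph V) (v : V) : Prop :=
  ∀ w, w ≠ v → G.Adj v w

/-- In every optimal proper coloring of `G`, every used color class has at least 2 vertices. -/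
def AllColorClassesBig {V : Type*} [Fintype V] (G : SimpleGraph V) : Prop :=
  ∀ (n : ℕ) (C : G.Coloring (Fin n)), (n : ℕ∞) = G.chromaticNumber →
    ∀ c : Fin n, (∃ u, C u = c) → 2 ≤ Fintype.card {u // C u = c}

/-- `G` is a perfect graph: clique number equals chromatic number for every induced subgraph. -/
def IsPerfect {V : Type*} [Fintype V] (G : SimpleGraph V) : Prop :=
  ∀ s : Finset V,
    (((G.induce (s : Set V)).cliqueNum : ℕ∞)) = (G.induce (s : Set V)).chromaticNumber

/-- Add a dominating vertex to `G`. -/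
def cone {V : Type*} (G : SimpleGraph V) : SimpleGraph (Option V) where
  Adj a b := match a, b with
    | some a, some b => G.Adj a b
    | some _, none => True
    | none, some _ => True
    | none, none => False
  symm := ⟨by rintro (_|a) (_|b) h <;> simp_all <;> exact h.symm⟩
  loopless := ⟨by rintro (_|a) h <;> simp_all⟩

/-- The claw `K_{1,3}`. -/
def claw : SimpleGraph (Fin 1 ⊕ Fin 3) := completeBipartiteGraph (Fin 1) (Fin 3)

/-- The gem: `P₄` plus a dominating vertex. -/
def gem : SimpleGraph (Option (Fin 4)) := cone (pathGraph 4)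

/-- The wheel `W₄`: `C₄` plus a dominating vertex. -/
def wheel4 : SimpleGraph (Option (Fin 4)) := cone (cycleGraph 4)

/-- The butterfly: two triangles sharing exactly one vertex. -/
def butterfly : SimpleGraph (Fin 5) :=
  SimpleGraph.fromRel (fun a b =>
    (a, b) ∈ [((0:Fin 5), (1:Fin 5)), (0,2), (1,2), (0,3), (0,4), (3,4)])

/-- `G` is a disjoint union of complete graphs. -/
def IsUnionOfCliques {V : Type*} (G : SimpleGraph V) : Prop :=
  ∀ a b c, G.Adj a b → G.Adj b c → a ≠ c → G.Adj a c

/-- `G` is neighborhood perfect: the neighborhood of every vertex induces a perfect graph. -/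
def NbhdPerfect {V : Type*} [Fintype V] (G : SimpleGraph V) : Prop :=
  ∀ v : V, IsPerfect (G.induce (G.neighborSet v))

/-!
Let `v` be a vertex of maximum degree. If some `w ≠ v` is not adjacent to `v`, then `G - w` has
the same maximum degree as `G` and no larger chromatic number, so it violates the bound as `G`
does, against minimality. If two dominating vertices `v ≠ w` existed, deleting `w` would lower
`Δ` by at most one (only the edge `vw` is lost at `v`) but `χ` by at least one (no other vertex
shares the colour of `w`), so again `G - w` would violate the bound.
-/

namespace SimpleGraph

variable {V : Type*} [Fintype V] {G : SimpleGraph V}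

def induceFinsetUnivIso (G : SimpleGraph V) :
    G.induce ((Finset.univ : Finset V) : Set V) ≃g G :=
  ⟨Equiv.subtypeUnivEquiv Finset.mem_univ, Iff.rfl⟩

lemma maxDegree_induce_univ :
    (G.induce ((Finset.univ : Finset V) : Set V)).maxDegree = G.maxDegree :=
  G.induceFinsetUnivIso.maxDegree_eq

lemma chromaticNumber_induce_univ :
    (G.induce ((Finset.univ : Finset V) : Set V)).chromaticNumber = G.chromaticNumber :=
  chromaticNumber_congr G.induceFinsetUnivIso

lemma chromaticNumber_induce_le {W : Type*} {H : SimpleGraph W} (s : Set W) :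
    (H.induce s).chromaticNumber ≤ H.chromaticNumber :=
  chromaticNumber_mono_of_hom (Embedding.induce s).toHom

lemma card_neighborFinset_induce (s : Finset V) (v : (s : Set V)) :
    ((G.induce (s : Set V)).neighborFinset v).card = (G.neighborFinset v ∩ s).card := by
  rw [← Finset.card_map (.subtype _)]
  congr 1
  ext w
  simp

lemma degree_le_maxDegree_induce {s : Finset V} {v : V} (hv : v ∈ s)
    (h : G.neighborFinset v ⊆ s) : G.degree v ≤ (G.induce (s : Set V)).maxDegree := by
  calc G.degree v = (G.induce (s : Set V)).degree ⟨v, hv⟩ := by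
        rw [← card_neighborFinset_eq_degree, ← card_neighborFinset_eq_degree,
          card_neighborFinset_induce, Finset.inter_eq_left.mpr h]
    _ ≤ _ := degree_le_maxDegree _ _

lemma degree_le_degree_induce_erase_add_one {v w : V} (h : v ≠ w) :
    G.degree v ≤ (G.induce ((Finset.univ.erase w : Finset V) : Set V)).degree
      ⟨v, by simpa using h⟩ + 1 := by
  rw [← card_neighborFinset_eq_degree, ← card_neighborFinset_eq_degree,
    card_neighborFinset_induce, Finset.inter_erase, Finset.inter_univ]
  exact Nat.le_succ_of_pred_le Finset.pred_card_le_card_erase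

end SimpleGraph

section Dominating

variable {V : Type*} [Fintype V] {G : SimpleGraph V} {v : V}

lemma IsDominatingVertex.neighborFinset_eq (hv : IsDominatingVertex G v) :
    G.neighborFinset v = Finset.univ.erase v := by
  ext w
  simpa using ⟨fun h => (G.ne_of_adj h).symm, hv w⟩

lemma IsDominatingVertex.degree_eq_maxDegree (hv : IsDominatingVertex G v) :
    G.degree v = G.maxDegree := by
  have : Nonempty V := ⟨v⟩
  refine le_antisymm (G.degree_le_maxDegree v) ?_
  rw [← card_neighborFinset_eq_degree, hv.neighborFinset_eq,
    Finset.card_erase_of_mem (Finset.mem_univ v), Finset.card_univ]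
  exact Nat.le_sub_one_of_lt G.maxDegree_lt_card_verts

lemma IsDominatingVertex.colorable_induce_erase {n : ℕ} (hv : IsDominatingVertex G v)
    (hG : G.Colorable (n + 1)) :
    (G.induce ((Finset.univ.erase v : Finset V) : Set V)).Colorable n := by
  obtain ⟨C⟩ := hG
  have C' : (G.induce ((Finset.univ.erase v : Finset V) : Set V)).Coloring
      {c : Fin (n + 1) // c ≠ C v} :=
    Coloring.mk (fun u => ⟨C u, C.valid (hv u (by simpa using u.2)) |>.symm⟩)
      fun huw hc => C.valid huw (congrArg Subtype.val hc)
  simpa [Fintype.card_subtype_compl] using C'.colorable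

lemma IsDominatingVertex.chromaticNumber_induce_erase_add_one_le
    (hv : IsDominatingVertex G v) :
    (G.induce ((Finset.univ.erase v : Finset V) : Set V)).chromaticNumber + 1 ≤
      G.chromaticNumber := by
  have : Nonempty V := ⟨v⟩
  obtain ⟨n, hn⟩ : ∃ n : ℕ, G.chromaticNumber = n + 1 := by
    obtain ⟨m, hm⟩ := ENat.ne_top_iff_exists.mp <|
      chromaticNumber_ne_top_iff_exists.mpr ⟨_, G.colorable_of_fintype⟩
    have hpos : 0 < m := by
      exact_mod_cast hm ▸ G.colorable_of_fintype.chromaticNumber_pos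
    exact ⟨m - 1, by rw [← hm]; norm_cast; omega⟩
  have hG : G.Colorable (n + 1) := chromaticNumber_le_iff_colorable.mp (by rw [hn]; rfl)
  rw [hn]
  gcongr
  exact (hv.colorable_induce_erase hG).chromaticNumber_le

end Dominating

section Upsilon

variable {k : ℕ} {V : Type*} [Fintype V] {G : SimpleGraph V}

lemma UpsilonMem.maxDegree_add_one_le [Nonempty V] (hG : UpsilonMem k G) :
    (G.maxDegree + 1 : ℕ∞) ≤ G.chromaticNumber + k := by
  simpa only [maxDegree_induce_univ, chromaticNumber_induce_univ] using
    hG Finset.univ Finset.univ_nonempty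

lemma MinForbUpsilon.nonempty (hG : MinForbUpsilon k G) : Nonempty V := by
  by_contra h
  rw [not_nonempty_iff] at h
  exact hG.1 fun s hs => (hs.ne_empty s.eq_empty_of_isEmpty).elim

lemma MinForbUpsilon.maxDegree_induce_add_one_le (hG : MinForbUpsilon k G) {s : Finset V}
    (hs : s.Nonempty) (hsu : s ≠ Finset.univ) :
    ((G.induce (s : Set V)).maxDegree + 1 : ℕ∞) ≤
      (G.induce (s : Set V)).chromaticNumber + k :=
  have : Nonempty (s : Set V) := hs.to_subtype
  (hG.2 s hsu).maxDegree_add_one_le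

lemma MinForbUpsilon.chromaticNumber_add_lt (hG : MinForbUpsilon k G) :
    G.chromaticNumber + k < G.maxDegree + 1 := by
  obtain ⟨s, hs, hlt⟩ : ∃ s : Finset V, s.Nonempty ∧
      (G.induce (s : Set V)).chromaticNumber + k < (G.induce (s : Set V)).maxDegree + 1 := by
    simpa [UpsilonMem] using hG.1
  by_cases hsu : s = Finset.univ
  · subst hsu
    simpa only [maxDegree_induce_univ, chromaticNumber_induce_univ] using hlt
  · exact absurd (hG.maxDegree_induce_add_one_le hs hsu) hlt.not_ge

lemma MinForbUpsilon.maxDegree_induce_erase_add_one_le (hG : MinForbUpsilon k G) {v w : V}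
    (hvw : v ≠ w) :
    ((G.induce ((Finset.univ.erase w : Finset V) : Set V)).maxDegree + 1 : ℕ∞) ≤
      (G.induce ((Finset.univ.erase w : Finset V) : Set V)).chromaticNumber + k :=
  hG.maxDegree_induce_add_one_le ⟨v, by simpa using hvw⟩
    (Finset.erase_ssubset (Finset.mem_univ w)).ne

lemma MinForbUpsilon.isDominatingVertex_of_degree_eq_maxDegree (hG : MinForbUpsilon k G)
    {v : V} (hv : G.degree v = G.maxDegree) : IsDominatingVertex G v := by
  intro w hwv
  by_contra hvw
  set s : Finset V := Finset.univ.erase w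
  have hΔ : G.maxDegree ≤ (G.induce (s : Set V)).maxDegree :=
    hv ▸ degree_le_maxDegree_induce (by simpa [s] using hwv.symm) fun u hu =>
      Finset.mem_erase.mpr ⟨by rintro rfl; exact hvw ((G.mem_neighborFinset _ _).mp hu),
        Finset.mem_univ u⟩
  apply hG.chromaticNumber_add_lt.not_ge
  calc (G.maxDegree + 1 : ℕ∞)
      ≤ (G.induce (s : Set V)).maxDegree + 1 := by gcongr
    _ ≤ (G.induce (s : Set V)).chromaticNumber + k :=
        hG.maxDegree_induce_erase_add_one_le hwv.symm
    _ ≤ G.chromaticNumber + k := by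
        gcongr
        exact chromaticNumber_induce_le _

lemma MinForbUpsilon.eq_of_isDominatingVertex (hG : MinForbUpsilon k G) {v w : V}
    (hv : IsDominatingVertex G v) (hw : IsDominatingVertex G w) : v = w := by
  by_contra hvw
  set s : Finset V := Finset.univ.erase w
  have hΔ : G.maxDegree ≤ (G.induce (s : Set V)).maxDegree + 1 :=
    hv.degree_eq_maxDegree ▸
      (degree_le_degree_induce_erase_add_one hvw).trans (by gcongr; exact degree_le_maxDegree _ _)
  apply hG.chromaticNumber_add_lt.not_ge
  calc (G.maxDegree + 1 : ℕ∞)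
      ≤ (G.induce (s : Set V)).maxDegree + 1 + 1 := by
        gcongr
        exact_mod_cast hΔ
    _ ≤ (G.induce (s : Set V)).chromaticNumber + k + 1 :=
        add_le_add_left (hG.maxDegree_induce_erase_add_one_le hvw) 1
    _ = (G.induce (s : Set V)).chromaticNumber + 1 + k := add_right_comm _ _ _
    _ ≤ G.chromaticNumber + k := by
        gcongr
        exact hw.chromaticNumber_induce_erase_add_one_le

end Upsilon

theorem minForbUpsilon_existsUnique_dominating (k : ℕ) {V : Type*} [Fintype V]
    (G : SimpleGraph V) (h : MinForbUpsilon k G) :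
    ∃! v : V, IsDominatingVertex G v := by
  have := h.nonempty
  obtain ⟨v, hv⟩ := G.exists_maximal_degree_vertex
  have hdom := h.isDominatingVertex_of_degree_eq_maxDegree hv.symm
  exact ⟨v, hdom, fun w hw => h.eq_of_isDominatingVertex hw hdom⟩
end

section
/- A graph G is neighborhood perfect (the neighborhood of every vertex induces a perfect graph) if and only if for all k ∈ ℕ₀ and all induced subgraphs H of G, H ∈ Ω_k if and only if H ∈ Υ_k. -/
open SimpleGraph

attribute [local instance] Classical.propDecidable

set_option linter.unnecessarySeqFocus false

/-!
If every neighbourhood is perfect and `H ∈ Υ_k`, pick a vertex `v` of maximum degree in `H`,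
with neighbourhood `N`. On `C = {v} ∪ N` we have `Δ(H) ≤ Δ(H[C])` and
`χ(H[C]) = χ(H[N]) + 1 = ω(H[N]) + 1 ≤ ω(H)`, so `Δ(H) + 1 ≤ χ(H[C]) + k ≤ ω(H) + k`.
The inclusion `Ω_k ⊆ Υ_k` always holds since `ω ≤ χ`.

Conversely, let `t` lie in the neighbourhood of `v` and `c = {v} ∪ t`. Every graph `H` lies in
`Υ_k` for `k = |H| - χ(H)`, because `Δ(H[s]) + 1 ≤ |s|` and `χ(H) ≤ χ(H[s]) + |H - s|`.
Hence `G[c] ∈ Ω_k`, and since `v` dominates `c`, `Δ(G[c]) + 1 = |c|` turns this into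
`χ(G[c]) ≤ ω(G[c])`, that is `χ(G[t]) ≤ ω(G[t])`.
-/

open Finset

namespace SimpleGraph

section Iso

variable {V W : Type*} {G : SimpleGraph V} {H : SimpleGraph W}

theorem Copy.cliqueNum_mono [Finite W] (f : Copy G H) : G.cliqueNum ≤ H.cliqueNum := by
  obtain ⟨s, hs⟩ := G.exists_isNClique_cliqueNum
  have hclique : H.IsClique (s.map f.toEmbedding : Set W) := by
    rw [coe_map]
    rintro _ ⟨a, ha, rfl⟩ _ ⟨b, hb, rfl⟩ hab
    exact f.toHom.map_adj (hs.isClique ha hb (ne_of_apply_ne _ hab))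
  simpa [hs.card_eq] using hclique.card_le_cliqueNum

theorem Iso.cliqueNum_eq [Finite V] [Finite W] (f : G ≃g H) : G.cliqueNum = H.cliqueNum :=
  f.toEmbedding.toCopy.cliqueNum_mono.antisymm f.symm.toEmbedding.toCopy.cliqueNum_mono

variable (G) in
noncomputable def induceInduceIso (s : Set V) (t : Finset s) :
    (G.induce s).induce (t : Set s) ≃g G.induce (t.map (Function.Embedding.subtype _) : Set V) where
  toEquiv := (Equiv.Set.image _ _ (Function.Embedding.subtype _).injective).trans
    (Equiv.setCongr (coe_map _ t).symm)
  map_rel_iff' := Iff.rfl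

end Iso

variable {V : Type*} (G : SimpleGraph V) {s t : Finset V} {v : V}

theorem chromaticNumber_ne_top_of_finite [Finite V] : G.chromaticNumber ≠ ⊤ :=
  chromaticNumber_ne_top_iff_exists.2 ⟨_, G.colorable_chromaticNumber_of_fintype⟩

variable {G} in
theorem IsClique.card_le_cliqueNum_induce {c : Finset V} (hc : G.IsClique c) (hcs : c ⊆ s) :
    #c ≤ (G.induce s).cliqueNum := by
  have hmap : (c.subtype (· ∈ (s : Set V))).map (Function.Embedding.subtype _) = c :=
    subtype_map_of_mem hcs
  have hc' : (G.induce s).IsNClique #c (c.subtype (· ∈ (s : Set V))) := by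
    rw [isNClique_induce_iff, hmap]
    exact ⟨hc, rfl⟩
  exact hc'.card_eq ▸ hc'.isClique.card_le_cliqueNum

theorem exists_isNClique_cliqueNum_induce (s : Finset V) :
    ∃ c ⊆ s, G.IsNClique (G.induce s).cliqueNum c := by
  obtain ⟨c, hc⟩ := (G.induce (s : Set V)).exists_isNClique_cliqueNum
  exact ⟨c.map (Function.Embedding.subtype _), coe_subset.1 (map_subtype_subset c),
    (isNClique_induce_iff _ _ _).1 hc⟩

theorem cliqueNum_induce_mono (h : t ⊆ s) : (G.induce t).cliqueNum ≤ (G.induce s).cliqueNum := by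
  obtain ⟨c, hct, hc⟩ := G.exists_isNClique_cliqueNum_induce t
  exact hc.card_eq ▸ hc.isClique.card_le_cliqueNum_induce (hct.trans h)

theorem cliqueNum_induce_insert_le :
    (G.induce (insert v s : Finset V)).cliqueNum ≤ (G.induce s).cliqueNum + 1 := by
  obtain ⟨c, hcs, hc⟩ := G.exists_isNClique_cliqueNum_induce (insert v s)
  have herase := (hc.isClique.subset (coe_subset.2 (erase_subset v c))).card_le_cliqueNum_induce
    (subset_insert_iff.1 hcs)
  have := pred_card_le_card_erase (a := v) (s := c)
  have := hc.card_eq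
  omega

theorem cliqueNum_induce_insert (hv : ∀ x ∈ s, G.Adj v x) :
    (G.induce (insert v s : Finset V)).cliqueNum = (G.induce s).cliqueNum + 1 := by
  refine G.cliqueNum_induce_insert_le.antisymm ?_
  obtain ⟨c, hcs, hc⟩ := G.exists_isNClique_cliqueNum_induce s
  have hvc : v ∉ c := fun h => G.loopless.irrefl v (hv v (hcs h))
  have hins : G.IsClique (insert v c : Finset V) := by
    rw [coe_insert]
    exact hc.isClique.insert fun x hx _ => hv x (hcs hx)
  simpa [card_insert_of_notMem hvc, hc.card_eq] using
    hins.card_le_cliqueNum_induce (insert_subset_insert v hcs)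

variable {G} in
theorem Colorable.induce_union {s : Set V} {n : ℕ} (h : (G.induce s).Colorable n)
    (t : Finset V) : (G.induce (s ∪ t)).Colorable (n + #t) := by
  obtain ⟨C⟩ := h
  let D : (G.induce (s ∪ t)).Coloring (Fin n ⊕ t) := Coloring.mk
    (fun x => if hx : x.1 ∈ s then .inl (C ⟨x, hx⟩) else .inr ⟨x, x.2.resolve_left hx⟩)
    fun {x y} hxy hD => by
      by_cases hx : x.1 ∈ s <;> by_cases hy : y.1 ∈ s <;> simp only [hx, hy, dite_true,
        dite_false, reduceCtorEq, Sum.inl.injEq, Sum.inr.injEq, Subtype.mk.injEq] at hD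
      · exact C.valid (show (G.induce s).Adj ⟨x, hx⟩ ⟨y, hy⟩ from hxy) hD
      · exact hxy.ne (Subtype.ext hD)
  simpa using D.colorable

theorem chromaticNumber_induce_union_le (s t : Finset V) :
    (G.induce (s ∪ t : Finset V)).chromaticNumber ≤ (G.induce s).chromaticNumber + #t := by
  obtain ⟨n, hn⟩ := ENat.ne_top_iff_exists.1 (G.induce (s : Set V)).chromaticNumber_ne_top_of_finite
  have hs : (G.induce (s : Set V)).Colorable n := by
    rw [← chromaticNumber_le_iff_colorable, hn]
  rw [← hn, coe_union]
  exact_mod_cast (hs.induce_union t).chromaticNumber_le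

theorem chromaticNumber_induce_insert (hv : ∀ x ∈ s, G.Adj v x) :
    (G.induce (insert v s : Finset V)).chromaticNumber = (G.induce s).chromaticNumber + 1 := by
  refine le_antisymm ?_ ?_
  · have := G.chromaticNumber_induce_union_le s {v}
    rwa [union_comm, ← insert_eq, card_singleton, Nat.cast_one] at this
  obtain ⟨n, hn⟩ := ENat.ne_top_iff_exists.1 (G.induce (s : Set V)).chromaticNumber_ne_top_of_finite
  rw [← hn, ← Nat.cast_succ]
  refine le_chromaticNumber_iff_coloring.2 fun m C => ?_
  -- `v` is adjacent to all of `s`, so its colour is missing on `s`.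
  let c₀ := C ⟨v, mem_insert_self v s⟩
  let D : (G.induce s).Coloring {a : Fin m | a ≠ c₀} := Coloring.mk
    (fun x => ⟨C ⟨x, mem_insert_of_mem x.2⟩, C.valid (hv x x.2).symm⟩)
    fun {x y} hxy hD => C.valid (v := ⟨x, mem_insert_of_mem x.2⟩)
      (w := ⟨y, mem_insert_of_mem y.2⟩) hxy (congrArg Subtype.val hD)
  have hD := D.colorable.chromaticNumber_le
  rw [Set.card_ne_eq, Fintype.card_fin, ← hn, Nat.cast_le] at hD
  have := c₀.pos
  omega

theorem degree_induce_eq_card_filter (s : Finset V) (v : (s : Set V)) :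
    (G.induce s).degree v = #{u ∈ s | G.Adj v u} := by
  rw [← card_neighborFinset_eq_degree, ← card_map (Function.Embedding.subtype _)]
  congr 1
  ext u
  simp [and_comm]

theorem maxDegree_induce_lt_card (hs : s.Nonempty) : (G.induce s).maxDegree < #s := by
  have := hs.to_subtype
  simpa using (G.induce (s : Set V)).maxDegree_lt_card_verts

theorem card_le_maxDegree_induce_insert (hv : ∀ x ∈ s, G.Adj v x) :
    #s ≤ (G.induce (insert v s : Finset V)).maxDegree := by
  have hdeg := G.degree_induce_eq_card_filter (insert v s) ⟨v, mem_insert_self v s⟩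
  rw [filter_insert, if_neg (G.loopless.irrefl v), filter_true_of_mem hv] at hdeg
  exact hdeg ▸ degree_le_maxDegree _ _

end SimpleGraph

theorem Finset.forall_map_subtype_iff {V : Type*} {s : Set V} {P : Finset V → Prop} :
    (∀ t : Finset s, P (t.map (Function.Embedding.subtype _))) ↔
      ∀ t : Finset V, ↑t ⊆ s → P t := by
  refine ⟨fun h t hts => ?_, fun h t => h _ (map_subtype_subset t)⟩
  simpa [subtype_map_of_mem hts] using h (t.subtype (· ∈ s))

section InducedSubgraphs

variable {V : Type*} (G : SimpleGraph V) {k : ℕ} {s : Set V} [Fintype s]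

-- The two sides carry different (but equal) `Fintype` and `DecidableRel` instances; `congr!`
-- identifies them.
theorem omegaMem_induce_iff :
    OmegaMem k (G.induce s) ↔ ∀ t : Finset V, ↑t ⊆ s → t.Nonempty →
      (G.induce t).maxDegree + 1 ≤ (G.induce t).cliqueNum + k := by
  refine Iff.trans (forall_congr' fun t => ?_) forall_map_subtype_iff
  rw [(induceInduceIso G s t).cliqueNum_eq, map_nonempty, ← (induceInduceIso G s t).maxDegree_eq]
  congr!

theorem upsilonMem_induce_iff :
    UpsilonMem k (G.induce s) ↔ ∀ t : Finset V, ↑t ⊆ s → t.Nonempty →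
      ((G.induce t).maxDegree + 1 : ℕ∞) ≤ (G.induce t).chromaticNumber + k := by
  refine Iff.trans (forall_congr' fun t => ?_) forall_map_subtype_iff
  rw [chromaticNumber_congr (induceInduceIso G s t), map_nonempty,
    ← (induceInduceIso G s t).maxDegree_eq]
  congr!

theorem isPerfect_induce_iff :
    IsPerfect (G.induce s) ↔ ∀ t : Finset V, ↑t ⊆ s →
      ((G.induce t).cliqueNum : ℕ∞) = (G.induce t).chromaticNumber := by
  refine Iff.trans (forall_congr' fun t => ?_) forall_map_subtype_iff
  rw [(induceInduceIso G s t).cliqueNum_eq, chromaticNumber_congr (induceInduceIso G s t)]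

end InducedSubgraphs

section OmegaUpsilon

variable {V : Type*} [Fintype V] {G : SimpleGraph V} {k : ℕ}

variable (G) in
theorem nbhdPerfect_iff :
    NbhdPerfect G ↔ ∀ (v : V) (t : Finset V), ↑t ⊆ G.neighborSet v →
      ((G.induce t).cliqueNum : ℕ∞) = (G.induce t).chromaticNumber :=
  forall_congr' fun _ => isPerfect_induce_iff G

theorem OmegaMem.upsilonMem (h : OmegaMem k G) : UpsilonMem k G := fun s hs =>
  calc ((G.induce s).maxDegree + 1 : ℕ∞) ≤ (G.induce s).cliqueNum + k := by exact_mod_cast h s hs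
    _ ≤ (G.induce s).chromaticNumber + k := by gcongr; exact cliqueNum_le_chromaticNumber

theorem upsilonMem_card_sub_of_chromaticNumber_eq {n : ℕ} (hn : G.chromaticNumber = n) :
    UpsilonMem (Fintype.card V - n) G := by
  intro s hs
  have hΔ := G.maxDegree_induce_lt_card hs
  have hχ : G.chromaticNumber ≤ (G.induce s).chromaticNumber + #sᶜ := by
    have := G.chromaticNumber_induce_union_le s sᶜ
    rwa [union_compl, coe_univ, chromaticNumber_congr (induceUnivIso G)] at this
  have hn_le : n ≤ Fintype.card V := by exact_mod_cast hn ▸ G.chromaticNumber_le_card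
  obtain ⟨m, hm⟩ := ENat.ne_top_iff_exists.1 (G.induce (s : Set V)).chromaticNumber_ne_top_of_finite
  rw [hn, ← hm] at hχ
  rw [← hm]
  have := card_compl_add_card s
  norm_cast at hχ ⊢
  omega

theorem NbhdPerfect.maxDegree_induce_add_one_le_cliqueNum_add (hG : NbhdPerfect G)
    {t : Finset V} (ht : t.Nonempty)
    (hΥ : ∀ e ⊆ t, e.Nonempty →
      ((G.induce e).maxDegree + 1 : ℕ∞) ≤ (G.induce e).chromaticNumber + k) :
    (G.induce t).maxDegree + 1 ≤ (G.induce t).cliqueNum + k := by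
  have := ht.to_subtype
  obtain ⟨v, hv⟩ := (G.induce (t : Set V)).exists_maximal_degree_vertex
  set N : Finset V := {u ∈ t | G.Adj v u}
  have hN : ∀ x ∈ N, G.Adj v x := fun x hx => (mem_filter.1 hx).2
  have hΔ : (G.induce t).maxDegree = #N := hv.trans (G.degree_induce_eq_card_filter t v)
  have hNt : insert v.1 N ⊆ t := insert_subset v.2 (filter_subset _ _)
  have key : ((G.induce t).maxDegree + 1 : ℕ∞) ≤ (G.induce t).cliqueNum + k := calc
    ((G.induce t).maxDegree + 1 : ℕ∞) = #N + 1 := by rw [hΔ]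
    _ ≤ (G.induce (insert v.1 N : Finset V)).maxDegree + 1 := by
      gcongr; exact_mod_cast G.card_le_maxDegree_induce_insert hN
    _ ≤ (G.induce (insert v.1 N : Finset V)).chromaticNumber + k :=
      hΥ _ hNt (insert_nonempty _ _)
    _ = (G.induce N).cliqueNum + 1 + k := by
      rw [G.chromaticNumber_induce_insert hN, ← (nbhdPerfect_iff G).1 hG v N hN]
    _ = (G.induce (insert v.1 N : Finset V)).cliqueNum + k := by
      rw [G.cliqueNum_induce_insert hN, Nat.cast_succ]
    _ ≤ (G.induce t).cliqueNum + k := by gcongr; exact G.cliqueNum_induce_mono hNt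
  exact_mod_cast key

theorem cliqueNum_induce_eq_chromaticNumber_of_upsilonMem_imp_omegaMem {v : V} {t : Finset V}
    (hv : ∀ x ∈ t, G.Adj v x)
    (h : ∀ k, UpsilonMem k (G.induce (insert v t : Finset V)) →
      OmegaMem k (G.induce (insert v t : Finset V))) :
    ((G.induce t).cliqueNum : ℕ∞) = (G.induce t).chromaticNumber := by
  have hvt : v ∉ t := fun hvt => G.loopless.irrefl v (hv v hvt)
  obtain ⟨n, hn⟩ := ENat.ne_top_iff_exists.1
    (G.induce (insert v t : Finset V)).chromaticNumber_ne_top_of_finite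
  obtain ⟨m, hm⟩ := ENat.ne_top_iff_exists.1 (G.induce (t : Set V)).chromaticNumber_ne_top_of_finite
  have hΩ := (omegaMem_induce_iff G).1 (h _ (upsilonMem_card_sub_of_chromaticNumber_eq hn.symm))
    _ subset_rfl (insert_nonempty v t)
  have hΔ := G.card_le_maxDegree_induce_insert hv
  have hω := G.cliqueNum_induce_insert hv
  have hχ := G.chromaticNumber_induce_insert hv
  have hn_le := (G.induce (insert v t : Finset V)).chromaticNumber_le_card
  have hωχ := (G.induce (t : Set V)).cliqueNum_le_chromaticNumber
  have hcard : Fintype.card ((insert v t : Finset V) : Set V) = #t + 1 := by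
    simp only [coe_sort_coe, Fintype.card_coe, card_insert_of_notMem hvt]
  rw [hcard] at hΩ hn_le
  rw [← hn, ← hm] at hχ
  rw [← hn] at hn_le
  rw [← hm] at hωχ ⊢
  norm_cast at *
  omega

end OmegaUpsilon

theorem nbhdPerfect_iff_omega_eq_upsilon {V : Type*} [Fintype V]
    (G : SimpleGraph V) :
    NbhdPerfect G ↔
      ∀ (k : ℕ) (s : Finset V),
        (OmegaMem k (G.induce (s : Set V)) ↔ UpsilonMem k (G.induce (s : Set V))) := by
  refine ⟨fun hG k s => ⟨OmegaMem.upsilonMem, fun hΥ => ?_⟩, fun h => ?_⟩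
  · rw [upsilonMem_induce_iff] at hΥ
    rw [omegaMem_induce_iff]
    exact fun t hts ht => hG.maxDegree_induce_add_one_le_cliqueNum_add ht
      fun e het => hΥ e ((coe_subset.2 het).trans hts)
  · exact (nbhdPerfect_iff G).2 fun v t ht =>
      cliqueNum_induce_eq_chromaticNumber_of_upsilonMem_imp_omegaMem ht fun k => (h k _).2
end
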